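/- arXiv:2202.04234 — 7 statements merged into one kernel-verified Lean document; each statement's English description precedes it below -/
import Mathlib

section
/- Every complex root α of u(x) = x^{m+1}(x^{m+1}+x)^k − 1 satisfies |α| ≥ r₊, where r₊ is the unique positive real root of u. -/
/-! On `[0, ∞)` the map `t ↦ t^(m+1) (t^(m+1) + t)^k` is strictly increasing, and by the triangle
inequality its value at `‖α‖` dominates `‖α^(m+1) (α^(m+1) + α)^k‖ = 1 = r^(m+1) (r^(m+1) + r)^k`.
Hence `‖α‖ < r` is impossible. -/

theorem norm_pow_mul_pow_add_pow_le {R : Type*} [SeminormedRing R] [NormOneClass R]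
    (x : R) (n k : ℕ) :
    ‖x ^ n * (x ^ n + x) ^ k‖ ≤ ‖x‖ ^ n * (‖x‖ ^ n + ‖x‖) ^ k := by
  calc ‖x ^ n * (x ^ n + x) ^ k‖ ≤ ‖x ^ n‖ * ‖(x ^ n + x) ^ k‖ := norm_mul_le _ _
    _ ≤ ‖x‖ ^ n * ‖x ^ n + x‖ ^ k := by gcongr <;> exact norm_pow_le _ _
    _ ≤ ‖x‖ ^ n * (‖x‖ ^ n + ‖x‖) ^ k := by
      gcongr
      exact (norm_add_le _ _).trans (by gcongr; exact norm_pow_le _ _)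

theorem strictMonoOn_pow_mul_pow_add_pow {n : ℕ} (hn : n ≠ 0) (k : ℕ) :
    StrictMonoOn (fun t : ℝ => t ^ n * (t ^ n + t) ^ k) (Set.Ici 0) := by
  intro s (hs : 0 ≤ s) t (_ : 0 ≤ t) hst
  have hpow : s ^ n < t ^ n := pow_lt_pow_left₀ hst hs hn
  have hsum : s ^ n + s ≤ t ^ n + t := by linarith
  have ht : 0 < t ^ n + t := by have := hs.trans_lt hst; positivity
  calc s ^ n * (s ^ n + s) ^ k ≤ s ^ n * (t ^ n + t) ^ k := by gcongr
    _ < t ^ n * (t ^ n + t) ^ k := by gcongr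

theorem abs_root_ge_general (m k : ℕ) (r : ℝ)
    (hroot : r ^ (m + 1) * (r ^ (m + 1) + r) ^ k - 1 = 0)
    (α : ℂ) (hα : α ^ (m + 1) * (α ^ (m + 1) + α) ^ k - 1 = 0) :
    r ≤ ‖α‖ := by
  by_contra! hlt
  have hα_norm : ‖α ^ (m + 1) * (α ^ (m + 1) + α) ^ k‖ = 1 := by
    rw [sub_eq_zero.mp hα, norm_one]
  have hmono := strictMonoOn_pow_mul_pow_add_pow m.add_one_ne_zero k
    (norm_nonneg α) (Set.mem_Ici.mpr ((norm_nonneg α).trans hlt.le)) hlt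
  have hle := norm_pow_mul_pow_add_pow_le α (m + 1) k
  linarith [sub_eq_zero.mp hroot]

theorem abs_root_ge (m k : ℕ) (hm : 1 ≤ m) (hk : 1 ≤ k) (r : ℝ) (hr : 0 < r)
    (hroot : r ^ (m + 1) * (r ^ (m + 1) + r) ^ k - 1 = 0)
    (α : ℂ) (hα : α ^ (m + 1) * (α ^ (m + 1) + α) ^ k - 1 = 0) :
    r ≤ ‖α‖ :=
  abs_root_ge_general m k r hroot α hα
end

section
/- For integers m, k ≥ 1 with (m−1)(k−1) ≥ 2, the inequality ((m+1)(k+1)/(mk)) · ( ((m+1)(k+1)/(mk))^{km/(m+k+1)} − 1 ) > 1 holds. -/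
theorem case1_ineq (m k : ℕ) (hm : 1 ≤ m) (hk : 1 ≤ k) (h : 2 ≤ (m - 1) * (k - 1)) :
    1 < (((m : ℝ) + 1) * ((k : ℝ) + 1) / ((m : ℝ) * k)) *
      ((((m : ℝ) + 1) * ((k : ℝ) + 1) / ((m : ℝ) * k)) ^ (((k : ℝ) * m) / ((m : ℝ) + k + 1)) - 1) := by
  have hm2 : 2 ≤ m := by
    rcases Nat.lt_or_ge m 2 with h' | h'
    · interval_cases m <;> simp at h
    · exact h'
  have hk2 : 2 ≤ k := by
    rcases Nat.lt_or_ge k 2 with h' | h'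
    · interval_cases k <;> simp at h
    · exact h'
  have hM : (2:ℝ) ≤ (m:ℝ) := by exact_mod_cast hm2
  have hK : (2:ℝ) ≤ (k:ℝ) := by exact_mod_cast hk2
  have hMK : (0:ℝ) < (m:ℝ) * k := by nlinarith
  have hS : (0:ℝ) < (m:ℝ) + k + 1 := by linarith
  have h' : (2:ℝ) ≤ ((m:ℝ) - 1) * ((k:ℝ) - 1) := by
    have : ((2:ℕ):ℝ) ≤ (((m-1)*(k-1) : ℕ) : ℝ) := by exact_mod_cast h
    push_cast [Nat.cast_sub hm, Nat.cast_sub hk] at this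
    push_cast
    linarith
  have hkm : (m:ℝ) + k + 1 ≤ (k:ℝ) * m := by nlinarith
  set s : ℝ := ((m:ℝ) + k + 1) / ((m:ℝ) * k) with hs_def
  set p : ℝ := ((k:ℝ) * m) / ((m:ℝ) + k + 1) with hp_def
  have hs0 : 0 < s := by positivity
  have hp1 : 1 ≤ p := by
    rw [hp_def, le_div_iff₀ hS]
    linarith
  have hr : ((m:ℝ) + 1) * ((k:ℝ) + 1) / ((m:ℝ) * k) = 1 + s := by
    rw [hs_def]
    field_simp
    ring
  have hps : p * s = 1 := by
    rw [hp_def, hs_def]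
    field_simp
  have hb : 1 + p * s ≤ (1 + s) ^ p :=
    one_add_mul_self_le_rpow_one_add (by linarith) hp1
  rw [hps] at hb
  rw [hr]
  nlinarith [hb, hs0]
end

section
/- For every integer k ≥ 1, the inequality (2(k+1)/k)·((2(k+1)/k)^{k/(k+2)} − 1) > 1 holds. -/
theorem case3_ineq (k : ℕ) (hk : 1 ≤ k) :
    1 < (2 * ((k : ℝ) + 1) / k) * ((2 * ((k : ℝ) + 1) / k) ^ ((k : ℝ) / ((k : ℝ) + 2)) - 1) := by
  have hk1 : (1:ℝ) ≤ (k:ℝ) := by exact_mod_cast hk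
  have hk0 : (0:ℝ) < (k:ℝ) := by linarith
  set K := (k:ℝ) with hK
  set x : ℝ := 2 * (K + 1) / K with hx
  have hK2 : (0:ℝ) < K + 2 := by linarith
  have hxpos : 0 < x := by positivity
  -- strict Bernoulli with s = (K+2)/K, p = (2K+2)/(K+2)
  have hs0 : (0:ℝ) < (K + 2) / K := by positivity
  have hp1 : 1 < (2*K + 2)/(K + 2) := by
    rw [lt_div_iff₀ hK2]; linarith
  have hB := one_add_mul_self_lt_rpow_one_add (s := (K+2)/K) (le_of_lt (by linarith))
    (ne_of_gt hs0) hp1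
  have h1s : 1 + (K + 2) / K = x := by
    rw [hx]; field_simp; ring
  have hps : (2*K + 2)/(K + 2) * ((K + 2) / K) = x := by
    rw [hx]; field_simp
  rw [h1s, hps] at hB
  -- hB : 1 + x < x ^ ((2*K+2)/(K+2))
  have hexp : (2*K + 2)/(K + 2) = 1 + K / (K + 2) := by
    field_simp; ring
  rw [hexp, Real.rpow_add hxpos, Real.rpow_one] at hB
  nlinarith [hB]
end

section
/- Every complex root α of u(x) = x^{m+1}(x^{m+1}+x)^k − 1 satisfies |α| < r₀ = ((m+1)(k+1)/(mk))^{k/(m+k+1)}. -/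
/-! Put `r = ‖α‖` and `b = ‖α ^ m + 1‖`, so that `r ^ (m + k + 1) * b ^ k = 1` and `r ^ m ≤ b + 1`.
With `c = (m + 1)(k + 1)/(m k) = 1 + x`, `x = (m + k + 1)/(m k)`, we have `r₀ = c ^ (k/(m + k + 1))`.
If `r ≥ r₀`, the first relation forces `b ≤ c⁻¹`, while `r ^ m ≥ r₀ ^ m = c ^ (1/x)`; hence
`c ^ (1/x) ≤ 1 + c⁻¹`, contradicting the elementary inequality `1 + (1 + x)⁻¹ < (1 + x) ^ (1/x)`. -/

open Real in
theorem Real.one_add_inv_one_add_lt_rpow_inv {x : ℝ} (hx : 0 < x) :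
    1 + (1 + x)⁻¹ < (1 + x) ^ x⁻¹ := by
  have hlog : (1 + x)⁻¹ < x⁻¹ * log (1 + x) := by
    calc (1 + x)⁻¹ ≤ x⁻¹ * (2 * x / (x + 2)) := by
          rw [inv_le_iff_one_le_mul₀ (by positivity)]
          field_simp
          linarith
      _ < x⁻¹ * log (1 + x) := mul_lt_mul_of_pos_left (lt_log_one_add_of_pos hx) (by positivity)
  calc 1 + (1 + x)⁻¹ < exp (1 + x)⁻¹ := by
        linarith [add_one_lt_exp (inv_pos.2 (by linarith : (0 : ℝ) < 1 + x)).ne']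
    _ < exp (x⁻¹ * log (1 + x)) := exp_lt_exp.2 hlog
    _ = (1 + x) ^ x⁻¹ := by rw [rpow_def_of_pos (by linarith), mul_comm]

theorem norm_pow_mul_norm_pow_add_one_eq_one {K : Type*} [NormedDivisionRing K] {m k : ℕ}
    {α : K} (hα : α ^ (m + 1) * (α ^ (m + 1) + α) ^ k = 1) :
    ‖α‖ ^ (m + k + 1) * ‖α ^ m + 1‖ ^ k = 1 := by
  have hfac : α ^ (m + 1) + α = α * (α ^ m + 1) := by rw [mul_add, mul_one, pow_succ']
  have := congrArg norm hα
  rw [hfac, norm_mul, norm_pow, norm_pow, norm_mul, norm_one] at this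
  rw [← this]
  ring

open Real in
theorem lt_rpow_of_pow_mul_pow_eq_one {m k : ℕ} (hk : k ≠ 0) {r b c : ℝ} (hb : 0 ≤ b)
    (hc : 0 < c) (hrb : r ^ (m + k + 1) * b ^ k = 1) (hr : r ^ m ≤ b + 1)
    (hkey : 1 + c⁻¹ < c ^ ((m * k : ℝ) / (m + k + 1))) :
    r < c ^ ((k : ℝ) / (m + k + 1)) := by
  by_contra! hle
  set ρ := c ^ ((k : ℝ) / (m + k + 1))
  have hρ : 0 ≤ ρ := rpow_nonneg hc.le _
  have hρ_pow_n : ρ ^ (m + k + 1) = c ^ k := by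
    rw [← rpow_mul_natCast hc.le, ← rpow_natCast c k]
    congr 1
    push_cast
    field_simp
  have hρ_pow_m : ρ ^ m = c ^ ((m * k : ℝ) / (m + k + 1)) := by
    rw [← rpow_mul_natCast hc.le]
    congr 1
    ring
  have hb_le : b ≤ c⁻¹ := by
    have hck : c ^ k ≤ r ^ (m + k + 1) := hρ_pow_n ▸ pow_le_pow_left₀ hρ hle _
    have : b ^ k ≤ c⁻¹ ^ k := by
      rw [eq_inv_of_mul_eq_one_right hrb, inv_pow]
      exact inv_anti₀ (by positivity) hck
    exact (pow_le_pow_iff_left₀ hb (by positivity) hk).mp this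
  have := hρ_pow_m ▸ pow_le_pow_left₀ hρ hle m
  linarith

theorem abs_root_lt_r0 (m k : ℕ) (hm : 1 ≤ m) (hk : 1 ≤ k) (α : ℂ)
    (hα : α ^ (m + 1) * (α ^ (m + 1) + α) ^ k - 1 = 0) :
    ‖α‖ < (((m : ℝ) + 1) * ((k : ℝ) + 1) / ((m : ℝ) * k)) ^ ((k : ℝ) / ((m : ℝ) + k + 1)) := by
  have hmk : (0 : ℝ) < m * k := by positivity
  have hc : ((m : ℝ) + 1) * ((k : ℝ) + 1) / ((m : ℝ) * k) = 1 + ((m : ℝ) + k + 1) / (m * k) := by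
    field_simp
    ring
  have hkey := Real.one_add_inv_one_add_lt_rpow_inv (x := ((m : ℝ) + k + 1) / (m * k))
    (by positivity)
  rw [inv_div] at hkey
  rw [hc]
  refine lt_rpow_of_pow_mul_pow_eq_one (by omega) (norm_nonneg _) (by positivity)
    (norm_pow_mul_norm_pow_add_one_eq_one (sub_eq_zero.mp hα)) ?_ hkey
  simpa only [norm_pow, add_sub_cancel_right, norm_one] using norm_sub_le (α ^ m + 1) 1
end

section
/- For any complex root α of u(x) = x^{m+1}(x^{m+1}+x)^k − 1, we have |(k+1)α^{m+1} + (k+m+1)α| ≤ (k+1)r₊^{m+1} + (k+m+1)r₊, where r₊ is the unique positive real root of u. -/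
/-!
Write `s = ‖α‖` and `t = ‖α ^ m + 1‖`, so that `s ^ (m + 1) * (s * t) ^ k = 1` and the left side is
at most `(k + 1) * (s * t) + m * s`, while the right side is `(k + 1) * v + m * r` with
`v = r ^ (m + 1) + r` and `r ^ (m + 1) * v ^ k = 1`. Since `t ≤ s ^ m + 1` and
`x ↦ x ^ (m + 1) * (x ^ (m + 1) + x) ^ k` is increasing, `r ≤ s`. Weighted AM-GM applied to
`v / (s * t)` and `r / s`, whose weighted geometric mean is `1`, gives
`(m + 1) * t * (s - r) ≤ k * (v - s * t)`; AM-GM together with `s ^ m ≤ t + 1` also gives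
`t ≥ m * k / ((m + 1) * (k + 1))`, and the two combine to `m * (s - r) ≤ (k + 1) * (v - s * t)`.
-/

theorem pow_mul_pow_le_arith_mean_pow {x y : ℝ} (hx : 0 ≤ x) (hy : 0 ≤ y) (a b : ℕ) :
    x ^ a * y ^ b ≤ ((a * x + b * y) / (a + b)) ^ (a + b) := by
  rcases Nat.eq_zero_or_pos (a + b) with hab | hab
  · obtain ⟨rfl, rfl⟩ : a = 0 ∧ b = 0 := by omega
    simp
  have hn : (0 : ℝ) < a + b := by exact_mod_cast hab
  have hweights : (a : ℝ) / (a + b) + b / (a + b) = 1 := by field_simp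
  have hmean := Real.geom_mean_le_arith_mean2_weighted (by positivity) (by positivity) hx hy
    hweights
  have hpow (z : ℝ) (hz : 0 ≤ z) (c : ℕ) : (z ^ ((c : ℝ) / (a + b))) ^ (a + b) = z ^ c := by
    rw [← Real.rpow_mul_natCast hz, Nat.cast_add, div_mul_cancel₀ _ hn.ne', Real.rpow_natCast]
  calc x ^ a * y ^ b
      = (x ^ ((a : ℝ) / (a + b)) * y ^ ((b : ℝ) / (a + b))) ^ (a + b) := by
        rw [mul_pow, hpow x hx, hpow y hy]
    _ ≤ ((a : ℝ) / (a + b) * x + b / (a + b) * y) ^ (a + b) :=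
        pow_le_pow_left₀ (by positivity) hmean _
    _ = ((a * x + b * y) / (a + b)) ^ (a + b) := by ring

theorem add_le_mul_add_mul_of_pow_mul_pow_eq_one {x y : ℝ} (hx : 0 ≤ x) (hy : 0 ≤ y) {a b : ℕ}
    (hxy : x ^ a * y ^ b = 1) : (a + b : ℝ) ≤ a * x + b * y := by
  rcases Nat.eq_zero_or_pos (a + b) with hab | hab
  · obtain ⟨rfl, rfl⟩ : a = 0 ∧ b = 0 := by omega
    simp
  have hn : (0 : ℝ) < a + b := by exact_mod_cast hab
  by_contra! hlt
  have hmean : (a * x + b * y) / (a + b) < 1 := (div_lt_one hn).2 hlt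
  have hlt_one := pow_lt_one₀ (by positivity) hmean hab.ne'
  linarith [pow_mul_pow_le_arith_mean_pow hx hy a b]

theorem div_pow_mul_div_add_one_pow_le_one (a b : ℕ) :
    ((a : ℝ) / (a + b)) ^ a * ((a : ℝ) / (a + b) + 1) ^ b ≤ 1 := by
  rcases Nat.eq_zero_or_pos (a + b) with hab | hab
  · obtain ⟨rfl, rfl⟩ : a = 0 ∧ b = 0 := by omega
    simp
  have hn : (0 : ℝ) < a + b := by exact_mod_cast hab
  have hmean : (a * (a / (a + b)) + b * (a / (a + b) + 1)) / (a + b) = (1 : ℝ) := by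
    field_simp
    ring
  simpa [hmean] using pow_mul_pow_le_arith_mean_pow (x := a / (a + b)) (y := a / (a + b) + 1)
    (by positivity) (by positivity) a b

theorem le_of_pow_mul_pow_add_le {m k : ℕ} {r s : ℝ} (hs : 0 ≤ s)
    (h : r ^ (m + 1) * (r ^ (m + 1) + r) ^ k ≤ s ^ (m + 1) * (s ^ (m + 1) + s) ^ k) : r ≤ s := by
  by_contra! hsr
  have hr : 0 < r := hs.trans_lt hsr
  have : s ^ (m + 1) * (s ^ (m + 1) + s) ^ k < r ^ (m + 1) * (r ^ (m + 1) + r) ^ k :=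
    calc s ^ (m + 1) * (s ^ (m + 1) + s) ^ k
        ≤ s ^ (m + 1) * (r ^ (m + 1) + r) ^ k := by gcongr
      _ < r ^ (m + 1) * (r ^ (m + 1) + r) ^ k := by gcongr
  linarith

theorem div_le_of_pow_mul_mul_pow_eq_one {m k : ℕ} {s t : ℝ} (hs : 0 ≤ s) (ht : 0 ≤ t)
    (hst : s ^ (m + 1) * (s * t) ^ k = 1) (hsm : s ^ m ≤ t + 1) :
    (m * k : ℝ) / ((m + 1) * (k + 1)) ≤ t := by
  set τ : ℝ := (m * k : ℝ) / ((m + 1) * (k + 1))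
  -- the weighted mean of `τ` and `τ + 1`, with weights `m * k` and `m + k + 1`, is `1`
  have hτ : τ = ((m * k : ℕ) : ℝ) / ((m * k : ℕ) + (m + k + 1 : ℕ)) := by
    push_cast
    ring
  have hτ_le := div_pow_mul_div_add_one_pow_le_one (m * k) (m + k + 1)
  rw [← hτ] at hτ_le
  have h_one_le : 1 ≤ t ^ (m * k) * (t + 1) ^ (m + k + 1) :=
    calc (1 : ℝ) = (s ^ (m + 1) * (s * t) ^ k) ^ m := by rw [hst, one_pow]
      _ = t ^ (m * k) * (s ^ m) ^ (m + k + 1) := by ring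
      _ ≤ t ^ (m * k) * (t + 1) ^ (m + k + 1) := by gcongr
  by_contra! htτ
  have hτ0 : 0 < τ := ht.trans_lt htτ
  have hlt : t ^ (m * k) * (t + 1) ^ (m + k + 1) < τ ^ (m * k) * (τ + 1) ^ (m + k + 1) :=
    calc t ^ (m * k) * (t + 1) ^ (m + k + 1)
        ≤ τ ^ (m * k) * (t + 1) ^ (m + k + 1) := by gcongr
      _ < τ ^ (m * k) * (τ + 1) ^ (m + k + 1) := by gcongr
  linarith

theorem critical_value_bound_of_norms {m k : ℕ} (hk : 1 ≤ k) {r s t : ℝ} (hr : 0 < r)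
    (hs : 0 ≤ s) (ht : 0 ≤ t) (hroot : r ^ (m + 1) * (r ^ (m + 1) + r) ^ k = 1)
    (hst : s ^ (m + 1) * (s * t) ^ k = 1) (hts : t ≤ s ^ m + 1) (hsm : s ^ m ≤ t + 1) :
    (k + 1) * (s * t) + m * s ≤ (k + 1) * (r ^ (m + 1) + r) + m * r := by
  have hst0 : s * t ≠ 0 := fun h ↦ by simp [h, zero_pow (by omega : k ≠ 0)] at hst
  have hs0 : 0 < s := hs.lt_of_ne (left_ne_zero_of_mul hst0).symm
  have hu0 : 0 < s * t := (mul_nonneg hs ht).lt_of_ne hst0.symm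
  have hrs : r ≤ s := by
    refine le_of_pow_mul_pow_add_le (m := m) (k := k) hs ?_
    rw [hroot, ← hst]
    have : s * t ≤ s ^ (m + 1) + s := by
      calc s * t ≤ s * (s ^ m + 1) := by gcongr
        _ = s ^ (m + 1) + s := by ring
    gcongr
  have ht_lower := div_le_of_pow_mul_mul_pow_eq_one hs ht hst hsm
  set v := r ^ (m + 1) + r
  set u := s * t
  have hratio : (v / u) ^ k * (r / s) ^ (m + 1) = 1 := by
    rw [div_pow, div_pow, div_mul_div_comm, div_eq_one_iff_eq (by positivity)]
    linarith
  have hamgm : (k + (m + 1) : ℝ) ≤ k * (v / u) + (m + 1) * (r / s) := by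
    exact_mod_cast add_le_mul_add_mul_of_pow_mul_pow_eq_one (by positivity) (by positivity) hratio
  have hcross : (m + 1) * t * (s - r) ≤ k * (v - u) := by
    have hmul : (k + (m + 1)) * u ≤ k * v + (m + 1) * r * t :=
      calc (k + (m + 1)) * u ≤ (k * (v / u) + (m + 1) * (r / s)) * u := by gcongr
        _ = k * v + (m + 1) * r * t := by field_simp; ring
    linear_combination hmul
  have ht_lower' : (m * k : ℝ) ≤ (m + 1) * (k + 1) * t := by
    rwa [div_le_iff₀ (by positivity), mul_comm t] at ht_lower
  have hk0 : (0 : ℝ) < k := by exact_mod_cast hk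
  have hscaled : (k : ℝ) * (m * (s - r)) ≤ k * ((k + 1) * (v - u)) := by
    linear_combination
      (k + 1 : ℝ) * hcross + mul_le_mul_of_nonneg_right ht_lower' (sub_nonneg.2 hrs)
  linarith [le_of_mul_le_mul_left hscaled hk0]

theorem critical_value_bound_general (m k : ℕ) (hk : 1 ≤ k) (r : ℝ) (hr : 0 < r)
    (hroot : r ^ (m + 1) * (r ^ (m + 1) + r) ^ k - 1 = 0)
    (α : ℂ) (hα : α ^ (m + 1) * (α ^ (m + 1) + α) ^ k - 1 = 0) :
    ‖((k : ℂ) + 1) * α ^ (m + 1) + ((k : ℂ) + (m : ℂ) + 1) * α‖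
      ≤ ((k : ℝ) + 1) * r ^ (m + 1) + ((k : ℝ) + m + 1) * r := by
  have hfactor : α ^ (m + 1) + α = α * (α ^ m + 1) := by ring
  have hst : ‖α‖ ^ (m + 1) * (‖α‖ * ‖α ^ m + 1‖) ^ k = 1 := by
    simpa [hfactor] using congrArg norm (sub_eq_zero.mp hα)
  have hts : ‖α ^ m + 1‖ ≤ ‖α‖ ^ m + 1 := by simpa using norm_add_le (α ^ m) 1
  have hsm : ‖α‖ ^ m ≤ ‖α ^ m + 1‖ + 1 := by simpa using norm_sub_le (α ^ m + 1) 1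
  have hkey := critical_value_bound_of_norms hk hr (norm_nonneg _) (norm_nonneg _)
    (sub_eq_zero.mp hroot) hst hts hsm
  calc ‖((k : ℂ) + 1) * α ^ (m + 1) + ((k : ℂ) + (m : ℂ) + 1) * α‖
      = ‖((k + 1 : ℕ) : ℂ) * (α * (α ^ m + 1)) + (m : ℂ) * α‖ := by push_cast; ring_nf
    _ ≤ (k + 1) * (‖α‖ * ‖α ^ m + 1‖) + m * ‖α‖ := by
        grw [norm_add_le]
        rw [norm_mul, norm_mul, norm_mul, Complex.norm_natCast, Complex.norm_natCast,
          Nat.cast_succ]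
    _ ≤ (k + 1) * (r ^ (m + 1) + r) + m * r := hkey
    _ = ((k : ℝ) + 1) * r ^ (m + 1) + ((k : ℝ) + m + 1) * r := by ring

theorem critical_value_bound (m k : ℕ) (hm : 1 ≤ m) (hk : 1 ≤ k) (r : ℝ) (hr : 0 < r)
    (hroot : r ^ (m + 1) * (r ^ (m + 1) + r) ^ k - 1 = 0)
    (α : ℂ) (hα : α ^ (m + 1) * (α ^ (m + 1) + α) ^ k - 1 = 0) :
    ‖((k : ℂ) + 1) * α ^ (m + 1) + ((k : ℂ) + (m : ℂ) + 1) * α‖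
      ≤ ((k : ℝ) + 1) * r ^ (m + 1) + ((k : ℝ) + m + 1) * r :=
  critical_value_bound_general m k hk r hr hroot α hα
end

section
/- If α is a complex root of u(x) = x^{m+1}(x^{m+1}+x)^k − 1 with |α| = r₊ (the unique positive real root), then α = ζ·r₊ for some m-th root of unity ζ. -/
/-! Taking norms in `α ^ (m + 1) * (α ^ (m + 1) + α) ^ k = 1` and comparing with the real equation
for `r = ‖α‖` gives `‖α ^ (m + 1) + α‖ = ‖α ^ (m + 1)‖ + ‖α‖`. Equality in the triangle inequality
forces `α ^ (m + 1)` to be a positive multiple of `α`, i.e. `α ^ m` is the positive real `r ^ m`. -/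

theorem Complex.pow_eq_norm_pow_of_norm_pow_succ_add_self {z : ℂ} {n : ℕ}
    (h : ‖z ^ (n + 1) + z‖ = ‖z‖ ^ (n + 1) + ‖z‖) : z ^ n = (‖z‖ : ℂ) ^ n := by
  rcases eq_or_ne z 0 with rfl | hz
  · simp
  rw [← norm_pow] at h
  have hsmul := (norm_add_eq_iff_real (F := ℂ)).mp h
  rw [norm_pow, Complex.real_smul, Complex.real_smul, Complex.ofReal_pow] at hsmul
  have hnorm : (‖z‖ : ℂ) ≠ 0 := Complex.ofReal_ne_zero.mpr (norm_ne_zero_iff.mpr hz)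
  refine mul_right_cancel₀ (mul_ne_zero hz hnorm) ?_
  linear_combination hsmul

theorem equality_case_root_of_unity_general (m k : ℕ) (hk : 1 ≤ k) (r : ℝ) (hr : 0 < r)
    (hroot : r ^ (m + 1) * (r ^ (m + 1) + r) ^ k - 1 = 0)
    (α : ℂ) (hα : α ^ (m + 1) * (α ^ (m + 1) + α) ^ k - 1 = 0)
    (habs : ‖α‖ = r) :
    ∃ ζ : ℂ, ζ ^ m = 1 ∧ α = ζ * r := by
  have hnorm : ‖α ^ (m + 1) + α‖ = r ^ (m + 1) + r := by
    have h := congrArg (‖·‖) (eq_of_sub_eq_zero hα)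
    simp only [norm_mul, norm_pow, habs, norm_one] at h
    have hpow := mul_left_cancel₀ (by positivity) (h.trans (eq_of_sub_eq_zero hroot).symm)
    exact (pow_left_inj₀ (norm_nonneg _) (by positivity) (by omega)).mp hpow
  have hαm := Complex.pow_eq_norm_pow_of_norm_pow_succ_add_self (habs ▸ hnorm)
  have hrC : (r : ℂ) ≠ 0 := Complex.ofReal_ne_zero.mpr hr.ne'
  refine ⟨α / r, ?_, (div_mul_cancel₀ α hrC).symm⟩
  rw [div_pow, hαm, habs, div_self (pow_ne_zero _ hrC)]

theorem equality_case_root_of_unity (m k : ℕ) (hm : 1 ≤ m) (hk : 1 ≤ k) (r : ℝ) (hr : 0 < r)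
    (hroot : r ^ (m + 1) * (r ^ (m + 1) + r) ^ k - 1 = 0)
    (α : ℂ) (hα : α ^ (m + 1) * (α ^ (m + 1) + α) ^ k - 1 = 0)
    (habs : ‖α‖ = r) :
    ∃ ζ : ℂ, ζ ^ m = 1 ∧ α = ζ * r :=
  equality_case_root_of_unity_general m k hk r hr hroot α hα habs
end

section
/- If α = e^{2πid/m}·r₊ is a complex root of u(x) = x^{m+1}(x^{m+1}+x)^k − 1, where r₊ is the unique positive real root of u and d ∈ ℤ, then m divides (k+1)d. -/
/-!
Write `ζ = exp(2πid/m) = μ^d` with `μ = exp(2πi/m)` a primitive `m`-th root of unity. Since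
`ζ^m = 1`, we get `(ζx)^(m+1) = ζ x^(m+1)`, so `u(ζx) = ζ^(k+1) u(x)`. As `u(r₊) = 1 = u(ζ r₊)`,
this forces `μ^((k+1)d) = ζ^(k+1) = 1`, i.e. `m ∣ (k+1)d`.
-/

namespace DivisibilityCondition

/-- The paper's `u` is `x ↦ u m k x - 1`. -/
def u {R : Type*} [CommRing R] (m k : ℕ) (x : R) : R :=
  x ^ (m + 1) * (x ^ (m + 1) + x) ^ k

theorem u_mul_of_pow_eq_one {R : Type*} [CommRing R] {m : ℕ} {ζ : R} (hζ : ζ ^ m = 1) (k : ℕ)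
    (x : R) : u m k (ζ * x) = ζ ^ (k + 1) * u m k x := by
  have hpow : (ζ * x) ^ (m + 1) = ζ * x ^ (m + 1) := by
    rw [mul_pow, pow_succ, hζ, one_mul]
  simp only [u, hpow, ← mul_add, mul_pow]
  ring

theorem zpow_pow_eq_one {G : Type*} [DivisionCommMonoid G] {μ : G} {m : ℕ} (hμ : μ ^ m = 1)
    (d : ℤ) : (μ ^ d) ^ m = 1 := by
  rw [← zpow_natCast, ← zpow_mul, mul_comm, zpow_mul, zpow_natCast, hμ, one_zpow]

theorem exp_two_pi_I_int_div (m : ℕ) (d : ℤ) :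
    Complex.exp (2 * Real.pi * Complex.I * d / m) =
      Complex.exp (2 * Real.pi * Complex.I / m) ^ d := by
  rw [← Complex.exp_int_mul]
  ring_nf

end DivisibilityCondition

open DivisibilityCondition in
theorem divisibility_condition_general (m k : ℕ) (hm : 1 ≤ m) (r : ℝ)
    (hroot : r ^ (m + 1) * (r ^ (m + 1) + r) ^ k - 1 = 0) (d : ℤ)
    (hα : (Complex.exp (2 * Real.pi * Complex.I * d / m) * r) ^ (m + 1) *
      ((Complex.exp (2 * Real.pi * Complex.I * d / m) * r) ^ (m + 1) +
        Complex.exp (2 * Real.pi * Complex.I * d / m) * r) ^ k - 1 = 0) :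
    (m : ℤ) ∣ ((k : ℤ) + 1) * d := by
  have hμ := Complex.isPrimitiveRoot_exp m (by omega)
  set μ := Complex.exp (2 * Real.pi * Complex.I / m)
  have hr : u m k (r : ℂ) = 1 := by
    unfold u
    exact_mod_cast congrArg Complex.ofReal (sub_eq_zero.mp hroot)
  have hζr : u m k (μ ^ d * r) = 1 := by
    rw [← exp_two_pi_I_int_div]
    exact sub_eq_zero.mp hα
  rw [u_mul_of_pow_eq_one (zpow_pow_eq_one hμ.pow_eq_one d), hr, mul_one, ← zpow_natCast,
    ← zpow_mul, mul_comm, hμ.zpow_eq_one_iff_dvd] at hζr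
  exact_mod_cast hζr

theorem divisibility_condition (m k : ℕ) (hm : 1 ≤ m) (hk : 1 ≤ k) (r : ℝ) (hr : 0 < r)
    (hroot : r ^ (m + 1) * (r ^ (m + 1) + r) ^ k - 1 = 0) (d : ℤ)
    (hα : (Complex.exp (2 * Real.pi * Complex.I * d / m) * r) ^ (m + 1) *
      ((Complex.exp (2 * Real.pi * Complex.I * d / m) * r) ^ (m + 1) +
        Complex.exp (2 * Real.pi * Complex.I * d / m) * r) ^ k - 1 = 0) :
    (m : ℤ) ∣ ((k : ℤ) + 1) * d :=
  divisibility_condition_general m k hm r hroot d hα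
end
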